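/- For all indices 1 ≤ i, j ≤ ℓ with i ≠ j, the difference operators satisfy the Yangian mixed lowering relation: (u − v)·[F_i(u), F_j(v)] = (iħ/2)·d_i·a_{ij}·(F_i(u)∘(F_j(u) − F_j(v)) + (F_j(u) − F_j(v))∘F_i(u)) − (F_i^{(0)}∘(F_j(u) − F_j(v)) − (F_j(u) − F_j(v))∘F_i^{(0)}), as an identity of ℂ(u,v)-linear endomorphisms of F, where [A,B] := A∘B − B∘A. -/

import Mathlib

open MvPolynomial Complex Finset

noncomputable section

/-- Variables: the spectral variables (indexed by `Fin 2`) and the `γ_{i,k}`. -/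
abbrev Var (ℓ : ℕ) (m : Fin ℓ → ℕ) := Fin 2 ⊕ ((i : Fin ℓ) × Fin (m i))

/-- The field of rational functions over `ℂ` in the spectral variables and the `γ_{i,k}`. -/
abbrev FF (ℓ : ℕ) (m : Fin ℓ → ℕ) := FractionRing (MvPolynomial (Var ℓ m) ℂ)

variable (ℓ : ℕ) (m : Fin ℓ → ℕ)

/-- The embedding of constants `ℂ → F`. -/
def cstHom : ℂ →+* FF ℓ m :=
  (algebraMap (MvPolynomial (Var ℓ m) ℂ) (FF ℓ m)).comp (C : ℂ →+* MvPolynomial (Var ℓ m) ℂ)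

def cst (c : ℂ) : FF ℓ m := cstHom ℓ m c

/-- The variable `γ_{i,k}` as an element of `F`. -/
def gam (i : Fin ℓ) (k : Fin (m i)) : FF ℓ m :=
  algebraMap (MvPolynomial (Var ℓ m) ℂ) (FF ℓ m) (X (Sum.inr ⟨i, k⟩))

/-- The spectral variables. -/
def spec (t : Fin 2) : FF ℓ m :=
  algebraMap (MvPolynomial (Var ℓ m) ℂ) (FF ℓ m) (X (Sum.inl t))

/-- The algebra automorphism of the polynomial ring shifting the variable `w` by `c`
and fixing all other variables. -/
def shiftPoly (c : ℂ) (w : Var ℓ m) :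
    MvPolynomial (Var ℓ m) ℂ ≃ₐ[ℂ] MvPolynomial (Var ℓ m) ℂ :=
  AlgEquiv.ofAlgHom
    (aeval (fun j => if j = w then X j + MvPolynomial.C c else X j))
    (aeval (fun j => if j = w then X j - MvPolynomial.C c else X j))
    (by apply MvPolynomial.algHom_ext; intro j; by_cases h : j = w <;> simp [h])
    (by apply MvPolynomial.algHom_ext; intro j; by_cases h : j = w <;> simp [h])

/-- The induced automorphism of the field of rational functions. -/
def shiftField (c : ℂ) (w : Var ℓ m) : FF ℓ m ≃+* FF ℓ m :=
  IsFractionRing.ringEquivOfRingEquiv (shiftPoly ℓ m c w).toRingEquiv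

variable (a : Fin ℓ → Fin ℓ → ℤ) (d : Fin ℓ → ℕ) (hb : ℂ)

/-- `β_{i,k}` : the automorphism `γ_{i,k} ↦ γ_{i,k} + iħ·d_i`. -/
def beta (i : Fin ℓ) (k : Fin (m i)) : FF ℓ m ≃+* FF ℓ m :=
  shiftField ℓ m (I * hb * (d i : ℂ)) (Sum.inr ⟨i, k⟩)

/-- The constant `(iħ/2)·(d_i·a_{ij} + 2r·d_j)`, where `r` is offset by one
(so that `r` ranges over `0, …, −a_{ji} − 1` in `Finset.range`). -/
def cf (i j : Fin ℓ) (r : ℕ) : ℂ :=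
  (I * hb / 2) * ((d i : ℂ) * (a i j : ℂ) + 2 * ((r : ℂ) + 1) * (d j : ℂ))

variable (l : Fin ℓ → ℕ) (ν : (i : Fin ℓ) → Fin (l i) → ℂ)

/-- `R_i(x) = Π_{t=1}^{l_i} (x − ν_{i,t})`, evaluated at `x ∈ F`. -/
def Rv (i : Fin ℓ) (x : FF ℓ m) : FF ℓ m :=
  ∏ t : Fin (l i), (x - cst ℓ m (ν i t))

/-- The operator `F_i(w)`. -/
def Fop (i : Fin ℓ) (w : FF ℓ m) : FF ℓ m → FF ℓ m := fun f =>
  cst ℓ m (-((d i : ℂ) ^ (-(1/2 : ℂ)))) *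
    ∑ k : Fin (m i),
      (Rv ℓ m l ν i (gam ℓ m i k + cst ℓ m (I * hb * (d i : ℂ))) *
        (∏ j ∈ univ.filter (fun j => j < i), ∏ r ∈ range (-(a j i)).toNat, ∏ p : Fin (m j),
          (gam ℓ m i k - gam ℓ m j p - cst ℓ m (cf ℓ a d hb i j r)
            + cst ℓ m (I * hb * (d i : ℂ)))) /
        ((w - gam ℓ m i k - cst ℓ m (I * hb * (d i : ℂ))) *
          ∏ p ∈ univ.erase k, (gam ℓ m i k - gam ℓ m i p))) *
      (beta ℓ m d hb i k) f

/-- The zero mode `F_i^{(0)}`. -/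
def F0op (i : Fin ℓ) : FF ℓ m → FF ℓ m := fun f =>
  cst ℓ m (-((d i : ℂ) ^ (-(1/2 : ℂ)))) *
    ∑ k : Fin (m i),
      (Rv ℓ m l ν i (gam ℓ m i k + cst ℓ m (I * hb * (d i : ℂ))) *
        (∏ j ∈ univ.filter (fun j => j < i), ∏ r ∈ range (-(a j i)).toNat, ∏ p : Fin (m j),
          (gam ℓ m i k - gam ℓ m j p - cst ℓ m (cf ℓ a d hb i j r)
            + cst ℓ m (I * hb * (d i : ℂ)))) /
        (∏ p ∈ univ.erase k, (gam ℓ m i k - gam ℓ m i p))) *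
      (beta ℓ m d hb i k) f

/-!
Write `F_i(w) = ∑_k α_{ik} / (w - z_{ik}) · β_{ik}` with poles `z_{ik} = γ_{ik} + iħ d_i` and
`F_i^{(0)} = ∑_k α_{ik} · β_{ik}`. For `i ≠ j` the shifts `β_{ik}`, `β_{jp}` commute and each
fixes the poles of the other family, so both sides of the relation are double sums over `(k, p)` of
coefficients times `β_{ik} β_{jp}`. Term by term the relation reduces to a rational identity in
`u, v`, which holds exactly when
`(z_{jp} - z_{ik} - κ) α_{ik} β_{ik}(α_{jp}) = (z_{jp} - z_{ik} + κ) β_{jp}(α_{ik}) α_{jp}`,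
`κ = (iħ/2) d_i a_{ij}`. Of `α_{ik}`, `α_{jp}`, one is fixed by the other colour's shift; in the
other, the only factors moved form a product `∏_r (γ - γ' - c_r)` over an arithmetic progression
`c_r` of step `iħ d`, which the shift telescopes to the ratio of its two boundary factors; by
`d_i a_{ij} = d_j a_{ji}` these are `z_{jp} - z_{ik} ∓ κ`.
-/

section DifferenceOperator

variable {K ι ι' : Type*} [Field K] [Fintype ι] [Fintype ι']

def diffOp (c : ι → K) (σ : ι → K ≃+* K) (f : K) : K := ∑ k, c k * σ k f

def polarDiffOp (α z : ι → K) (σ : ι → K ≃+* K) (w : K) : K → K :=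
  diffOp (fun k => α k / (w - z k)) σ

lemma diffOp_sub_diffOp (c c' : ι → K) (σ : ι → K ≃+* K) :
    diffOp c σ - diffOp c' σ = diffOp (c - c') σ := by
  funext f
  simp only [Pi.sub_apply, diffOp, sub_mul, sum_sub_distrib]

lemma diffOp_comp (c : ι → K) (σ : ι → K ≃+* K) (c' : ι' → K) (σ' : ι' → K ≃+* K)
    (f : K) :
    diffOp c σ (diffOp c' σ' f) = ∑ k, ∑ p, c k * σ k (c' p) * σ k (σ' p f) := by
  simp only [diffOp, map_sum, map_mul, mul_sum, mul_assoc]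

lemma diffOp_comp_of_commute (c : ι → K) (σ : ι → K ≃+* K) (c' : ι' → K)
    (σ' : ι' → K ≃+* K)    (hcomm : ∀ k p f, σ k (σ' p f) = σ' p (σ k f)) (f : K) :
    diffOp c' σ' (diffOp c σ f) = ∑ k, ∑ p, c' p * σ' p (c k) * σ k (σ' p f) := by
  rw [diffOp_comp, sum_comm]
  simp only [hcomm]

lemma mixed_relation_pair (u v x y κ a a' b b' : K)
    (hrel : (y - x - κ) * (a * b') = (y - x + κ) * (a' * b))
    (hux : u - x ≠ 0) (huy : u - y ≠ 0) (hvy : v - y ≠ 0) :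
    (u - v) * (a / (u - x) * (b' / (v - y)) - b / (v - y) * (a' / (u - x)))
      = κ * (a / (u - x) * (b' / (u - y) - b' / (v - y))
          + (b / (u - y) - b / (v - y)) * (a' / (u - x)))
        - (a * (b' / (u - y) - b' / (v - y)) - (b / (u - y) - b / (v - y)) * a') := by
  field_simp
  linear_combination (v - u) * hrel

theorem polarDiffOp_mixed_relation (α z : ι → K) (σ : ι → K ≃+* K)
    (α' z' : ι' → K) (σ' : ι' → K ≃+* K) (u v κ : K)
    (hcomm : ∀ k p f, σ k (σ' p f) = σ' p (σ k f))
    (hσu : ∀ k, σ k u = u) (hσv : ∀ k, σ k v = v) (hσ'u : ∀ p, σ' p u = u)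
    (hσz' : ∀ k p, σ k (z' p) = z' p) (hσ'z : ∀ k p, σ' p (z k) = z k)
    (hrel : ∀ k p, (z' p - z k - κ) * (α k * σ k (α' p))
      = (z' p - z k + κ) * (σ' p (α k) * α' p))
    (hz : ∀ k, u - z k ≠ 0) (hz'u : ∀ p, u - z' p ≠ 0) (hz'v : ∀ p, v - z' p ≠ 0) :
    (u - v) • (polarDiffOp α z σ u ∘ polarDiffOp α' z' σ' v
        - polarDiffOp α' z' σ' v ∘ polarDiffOp α z σ u)
      = κ • (polarDiffOp α z σ u ∘ (polarDiffOp α' z' σ' u - polarDiffOp α' z' σ' v)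
          + (polarDiffOp α' z' σ' u - polarDiffOp α' z' σ' v) ∘ polarDiffOp α z σ u)
        - (diffOp α σ ∘ (polarDiffOp α' z' σ' u - polarDiffOp α' z' σ' v)
          - (polarDiffOp α' z' σ' u - polarDiffOp α' z' σ' v) ∘ diffOp α σ) := by
  have hσ : ∀ k p w, σ k w = w → σ k (α' p / (w - z' p)) = σ k (α' p) / (w - z' p) := by
    intro k p w hw
    rw [map_div₀, map_sub, hw, hσz']
  have hσ' : ∀ k p, σ' p (α k / (u - z k)) = σ' p (α k) / (u - z k) := by
    intro k p
    rw [map_div₀, map_sub, hσ'u, hσ'z]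
  funext f
  simp only [polarDiffOp, diffOp_sub_diffOp, Pi.smul_apply, Pi.sub_apply, Pi.add_apply,
    Function.comp_apply, smul_eq_mul, diffOp_comp, diffOp_comp_of_commute _ _ _ _ hcomm,
    mul_sum, ← sum_sub_distrib, ← sum_add_distrib, map_sub, hσ _ _ _ (hσu _),
    hσ _ _ _ (hσv _), hσ']
  refine sum_congr rfl fun k _ => sum_congr rfl fun p _ => ?_
  linear_combination σ k (σ' p f) *
    mixed_relation_pair u v (z k) (z' p) κ (α k) (σ' p (α k)) (α' p) (σ k (α' p))
      (hrel k p) (hz k) (hz'u p) (hz'v p)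

end DifferenceOperator

section ShiftAutomorphism

variable {ℓ : ℕ} {m : Fin ℓ → ℕ}

lemma shiftPoly_X (c : ℂ) (w v : Var ℓ m) :
    shiftPoly ℓ m c w (X v) = if v = w then X v + MvPolynomial.C c else X v :=
  aeval_X _ v

lemma shiftPoly_C (c c' : ℂ) (w : Var ℓ m) :
    shiftPoly ℓ m c w (MvPolynomial.C c') = MvPolynomial.C c' :=
  aeval_C _ c'

lemma shiftPoly_comm (c c' : ℂ) {w w' : Var ℓ m} (h : w ≠ w')
    (q : MvPolynomial (Var ℓ m) ℂ) :
    shiftPoly ℓ m c w (shiftPoly ℓ m c' w' q)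
      = shiftPoly ℓ m c' w' (shiftPoly ℓ m c w q) := by
  suffices (shiftPoly ℓ m c w).toAlgHom.comp (shiftPoly ℓ m c' w').toAlgHom
      = (shiftPoly ℓ m c' w').toAlgHom.comp (shiftPoly ℓ m c w).toAlgHom from
    DFunLike.congr_fun this q
  refine MvPolynomial.algHom_ext fun v => ?_
  by_cases hv : v = w <;> by_cases hv' : v = w' <;>
    simp_all [shiftPoly_X, shiftPoly_C]

lemma shiftField_algebraMap (c : ℂ) (w : Var ℓ m) (q : MvPolynomial (Var ℓ m) ℂ) :
    shiftField ℓ m c w (algebraMap (MvPolynomial (Var ℓ m) ℂ) (FF ℓ m) q)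
      = algebraMap (MvPolynomial (Var ℓ m) ℂ) (FF ℓ m) (shiftPoly ℓ m c w q) :=
  IsFractionRing.ringEquivOfRingEquiv_algebraMap _ q

lemma shiftField_cst (c c' : ℂ) (w : Var ℓ m) :
    shiftField ℓ m c w (cst ℓ m c') = cst ℓ m c' := by
  rw [cst, cstHom, RingHom.comp_apply, shiftField_algebraMap]
  exact congrArg _ (shiftPoly_C c c' w)

lemma shiftField_X_self (c : ℂ) (w : Var ℓ m) :
    shiftField ℓ m c w (algebraMap (MvPolynomial (Var ℓ m) ℂ) (FF ℓ m) (X w))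
      = algebraMap (MvPolynomial (Var ℓ m) ℂ) (FF ℓ m) (X w) + cst ℓ m c := by
  rw [shiftField_algebraMap, shiftPoly_X, if_pos rfl, map_add]
  rfl

lemma shiftField_X_of_ne (c : ℂ) {v w : Var ℓ m} (h : v ≠ w) :
    shiftField ℓ m c w (algebraMap (MvPolynomial (Var ℓ m) ℂ) (FF ℓ m) (X v))
      = algebraMap (MvPolynomial (Var ℓ m) ℂ) (FF ℓ m) (X v) := by
  rw [shiftField_algebraMap, shiftPoly_X, if_neg h]

lemma shiftField_comm (c c' : ℂ) {w w' : Var ℓ m} (h : w ≠ w') (f : FF ℓ m) :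
    shiftField ℓ m c w (shiftField ℓ m c' w' f)
      = shiftField ℓ m c' w' (shiftField ℓ m c w f) := by
  suffices ((shiftField ℓ m c w : FF ℓ m →+* FF ℓ m).comp
        (shiftField ℓ m c' w' : FF ℓ m →+* FF ℓ m))
      = (shiftField ℓ m c' w' : FF ℓ m →+* FF ℓ m).comp
        (shiftField ℓ m c w : FF ℓ m →+* FF ℓ m) from
    DFunLike.congr_fun this f
  refine IsLocalization.ringHom_ext (nonZeroDivisors (MvPolynomial (Var ℓ m) ℂ))
    (RingHom.ext fun q => ?_)
  simp only [RingHom.comp_apply, RingEquiv.coe_toRingHom, shiftField_algebraMap]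
  exact congrArg _ (shiftPoly_comm c c' h q)

end ShiftAutomorphism

section ProductShift

variable {R G ι : Type*} [CommRing R] [FunLike G R R] [RingHomClass G R R] [DecidableEq ι]

lemma mul_map_prod_range_of_shift (σ : G) (F : ℕ → R) (hF : ∀ r, σ (F r) = F (r + 1))
    (n : ℕ) :
    F 0 * σ (∏ r ∈ range n, F r) = F n * ∏ r ∈ range n, F r := by
  rw [map_prod, prod_congr rfl fun r _ => hF r, mul_comm (F 0), ← prod_range_succ' F n,
    prod_range_succ, mul_comm]

lemma mul_map_prod_of_map_eq_of_ne (σ : G) {s : Finset ι} {g : ι → R} {x : ι} (hx : x ∈ s)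
    (hfix : ∀ y ∈ s, y ≠ x → σ (g y) = g y) {e e' : R} (he : e * σ (g x) = e' * g x) :
    e * σ (∏ y ∈ s, g y) = e' * ∏ y ∈ s, g y := by
  rw [map_prod, ← mul_prod_erase s _ hx, ← mul_prod_erase s g hx,
    prod_congr rfl fun y hy => hfix y (mem_of_mem_erase hy) (ne_of_mem_erase hy)]
  linear_combination (∏ y ∈ s.erase x, g y) * he

end ProductShift

def pole (i : Fin ℓ) (k : Fin (m i)) : FF ℓ m :=
  gam ℓ m i k + cst ℓ m (I * hb * (d i : ℂ))

def kappa (i j : Fin ℓ) : FF ℓ m := cst ℓ m (I * hb / 2 * ((d i : ℂ) * (a i j : ℂ)))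

def crossFactor (i : Fin ℓ) (k : Fin (m i)) (j : Fin ℓ) (p : Fin (m j)) (r : ℕ) : FF ℓ m :=
  gam ℓ m i k - gam ℓ m j p - cst ℓ m (cf ℓ a d hb i j r) + cst ℓ m (I * hb * (d i : ℂ))

def interaction (i : Fin ℓ) (k : Fin (m i)) : FF ℓ m :=
  ∏ x ∈ (univ.filter (· < i)).sigma fun j => (univ : Finset (Fin (m j))),
    ∏ r ∈ range (-(a x.1 i)).toNat, crossFactor ℓ m a d hb i k x.1 x.2 r

def coef (i : Fin ℓ) (k : Fin (m i)) : FF ℓ m :=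
  cst ℓ m (-((d i : ℂ) ^ (-(1/2 : ℂ)))) *
    (Rv ℓ m l ν i (pole ℓ m d hb i k) * interaction ℓ m a d hb i k) /
    ∏ p ∈ univ.erase k, (gam ℓ m i k - gam ℓ m i p)

section YangianOperators

variable {ℓ : ℕ} {m : Fin ℓ → ℕ} {a : Fin ℓ → Fin ℓ → ℤ} {d : Fin ℓ → ℕ}
  {hb : ℂ} {l : Fin ℓ → ℕ} {ν : (i : Fin ℓ) → Fin (l i) → ℂ}

lemma kappa_symm {i j : Fin ℓ} (hsym : (d i : ℤ) * a i j = d j * a j i) :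
    kappa ℓ m a d hb i j = kappa ℓ m a d hb j i := by
  have hsym' : (d i : ℂ) * (a i j : ℂ) = (d j : ℂ) * (a j i : ℂ) := by exact_mod_cast hsym
  rw [kappa, kappa, hsym']

lemma beta_cst (i : Fin ℓ) (k : Fin (m i)) (c : ℂ) :
    beta ℓ m d hb i k (cst ℓ m c) = cst ℓ m c :=
  shiftField_cst _ _ _

lemma beta_spec (i : Fin ℓ) (k : Fin (m i)) (t : Fin 2) :
    beta ℓ m d hb i k (spec ℓ m t) = spec ℓ m t :=
  shiftField_X_of_ne _ Sum.inl_ne_inr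

lemma beta_gam_self (i : Fin ℓ) (k : Fin (m i)) :
    beta ℓ m d hb i k (gam ℓ m i k) = gam ℓ m i k + cst ℓ m (I * hb * (d i : ℂ)) :=
  shiftField_X_self _ _

lemma beta_gam_of_ne {i j : Fin ℓ} (k : Fin (m i)) (p : Fin (m j))
    (h : (⟨j, p⟩ : (i : Fin ℓ) × Fin (m i)) ≠ ⟨i, k⟩) :
    beta ℓ m d hb i k (gam ℓ m j p) = gam ℓ m j p :=
  shiftField_X_of_ne _ (Sum.inr_injective.ne h)

lemma beta_gam_of_index_ne {i j : Fin ℓ} (h : j ≠ i) (k : Fin (m i)) (p : Fin (m j)) :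
    beta ℓ m d hb i k (gam ℓ m j p) = gam ℓ m j p :=
  beta_gam_of_ne k p fun e => h (congrArg Sigma.fst e)

lemma beta_comm {i j : Fin ℓ} (h : i ≠ j) (k : Fin (m i)) (p : Fin (m j)) (f : FF ℓ m) :
    beta ℓ m d hb i k (beta ℓ m d hb j p f) = beta ℓ m d hb j p (beta ℓ m d hb i k f) :=
  shiftField_comm _ _ (fun e => h (congrArg Sigma.fst (Sum.inr_injective e))) f

lemma Fop_eq_polarDiffOp (i : Fin ℓ) (w : FF ℓ m) :
    Fop ℓ m a d hb l ν i w
      = polarDiffOp (coef ℓ m a d hb l ν i) (pole ℓ m d hb i) (beta ℓ m d hb i) w := by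
  funext f
  simp only [Fop, polarDiffOp, diffOp, coef, interaction, crossFactor, pole, prod_sigma,
    mul_sum, div_div, sub_sub]
  refine sum_congr rfl fun k _ => ?_
  rw [prod_congr rfl fun j _ => prod_comm]
  ring

lemma F0op_eq_diffOp (i : Fin ℓ) :
    F0op ℓ m a d hb l ν i = diffOp (coef ℓ m a d hb l ν i) (beta ℓ m d hb i) := by
  funext f
  simp only [F0op, diffOp, coef, interaction, crossFactor, pole, prod_sigma, mul_sum]
  refine sum_congr rfl fun k _ => ?_
  rw [prod_congr rfl fun j _ => prod_comm]
  ring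

lemma beta_pole_of_ne {i j : Fin ℓ} (h : i ≠ j) (k : Fin (m i)) (p : Fin (m j)) :
    beta ℓ m d hb i k (pole ℓ m d hb j p) = pole ℓ m d hb j p := by
  rw [pole, map_add, beta_gam_of_index_ne h.symm, beta_cst]

lemma spec_sub_pole_ne_zero (t : Fin 2) (i : Fin ℓ) (k : Fin (m i)) :
    spec ℓ m t - pole ℓ m d hb i k ≠ 0 := by
  set c := I * hb * (d i : ℂ)
  have hq : (X (Sum.inl t) - (X (Sum.inr ⟨i, k⟩) + MvPolynomial.C c) :
      MvPolynomial (Var ℓ m) ℂ) ≠ 0 := fun h0 => by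
    simpa using congrArg (aeval fun v : Var ℓ m => if v = Sum.inl t then c + 1 else 0) h0
  rw [spec, pole, gam, cst, cstHom, RingHom.comp_apply, ← map_add, ← map_sub]
  exact (map_ne_zero_iff _ (IsFractionRing.injective _ _)).mpr hq

lemma beta_crossFactor_of_ne {i j : Fin ℓ} (hji : j ≠ i) (k : Fin (m i)) (p : Fin (m j))
    {x : (i : Fin ℓ) × Fin (m i)} (hx : x ≠ ⟨j, p⟩) (r : ℕ) :
    beta ℓ m d hb j p (crossFactor ℓ m a d hb i k x.1 x.2 r)
      = crossFactor ℓ m a d hb i k x.1 x.2 r := by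
  rw [crossFactor, map_add, map_sub, map_sub,
    beta_gam_of_index_ne hji.symm, beta_gam_of_ne p x.2 hx,
    beta_cst, beta_cst]

lemma beta_crossFactor_self {i j : Fin ℓ} (hji : j ≠ i) (k : Fin (m i)) (p : Fin (m j))
    (r : ℕ) :
    beta ℓ m d hb j p (crossFactor ℓ m a d hb i k j p r)
      = crossFactor ℓ m a d hb i k j p (r + 1) := by
  have hcf : cf ℓ a d hb i j (r + 1) = cf ℓ a d hb i j r + I * hb * (d j : ℂ) := by
    simp only [cf]; push_cast; ring
  rw [crossFactor, crossFactor, map_add, map_sub, map_sub,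
    beta_gam_of_index_ne hji.symm, beta_gam_self, beta_cst, beta_cst,
    hcf, cst, cst, cst, cst, map_add]
  ring

lemma crossFactor_zero (i : Fin ℓ) (k : Fin (m i)) (j : Fin ℓ) (p : Fin (m j)) :
    crossFactor ℓ m a d hb i k j p 0
      = pole ℓ m d hb i k - pole ℓ m d hb j p - kappa ℓ m a d hb i j := by
  have hcf :
      cf ℓ a d hb i j 0 = I * hb / 2 * ((d i : ℂ) * (a i j : ℂ)) + I * hb * (d j : ℂ) := by
    simp only [cf]; push_cast; ring
  rw [crossFactor, pole, pole, kappa, hcf, cst, cst, cst, cst, map_add]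
  ring

lemma crossFactor_toNat {i j : Fin ℓ} (ha : a j i ≤ 0)
    (hsym : (d i : ℤ) * a i j = d j * a j i) (k : Fin (m i)) (p : Fin (m j)) :
    crossFactor ℓ m a d hb i k j p (-(a j i)).toNat
      = pole ℓ m d hb i k - pole ℓ m d hb j p + kappa ℓ m a d hb i j := by
  have hR : (((-(a j i)).toNat : ℕ) : ℂ) = -(a j i : ℂ) := by
    rw [← Int.cast_natCast, Int.toNat_of_nonneg (neg_nonneg.mpr ha), Int.cast_neg]
  have hsym' : (d i : ℂ) * (a i j : ℂ) = (d j : ℂ) * (a j i : ℂ) := by exact_mod_cast hsym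
  have hcf : cf ℓ a d hb i j (-(a j i)).toNat
      = -(I * hb / 2 * ((d i : ℂ) * (a i j : ℂ))) + I * hb * (d j : ℂ) := by
    rw [cf, hR]; linear_combination (I * hb) * hsym'
  rw [crossFactor, pole, pole, kappa, hcf, cst, cst, cst, cst, map_add, map_neg]
  ring

lemma beta_prod_crossFactor_of_ne {i j : Fin ℓ} (hji : j ≠ i) (k : Fin (m i)) (p : Fin (m j))
    {x : (i : Fin ℓ) × Fin (m i)} (hx : x ≠ ⟨j, p⟩) (n : ℕ) :
    beta ℓ m d hb j p (∏ r ∈ range n, crossFactor ℓ m a d hb i k x.1 x.2 r)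
      = ∏ r ∈ range n, crossFactor ℓ m a d hb i k x.1 x.2 r := by
  rw [map_prod]
  exact prod_congr rfl fun r _ => beta_crossFactor_of_ne hji k p hx r

lemma beta_interaction_of_not_lt {i j : Fin ℓ} (hji : j ≠ i) (h : ¬ j < i)
    (k : Fin (m i)) (p : Fin (m j)) :
    beta ℓ m d hb j p (interaction ℓ m a d hb i k) = interaction ℓ m a d hb i k := by
  rw [interaction, map_prod]
  refine prod_congr rfl fun x hx => beta_prod_crossFactor_of_ne hji k p ?_ _
  rintro rfl
  exact h (by simpa using hx)

lemma beta_interaction_of_lt {i j : Fin ℓ} (h : j < i) (ha : a j i ≤ 0)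
    (hsym : (d i : ℤ) * a i j = d j * a j i) (k : Fin (m i)) (p : Fin (m j)) :
    (pole ℓ m d hb i k - pole ℓ m d hb j p - kappa ℓ m a d hb i j)
        * beta ℓ m d hb j p (interaction ℓ m a d hb i k)
      = (pole ℓ m d hb i k - pole ℓ m d hb j p + kappa ℓ m a d hb i j)
        * interaction ℓ m a d hb i k := by
  have hji : j ≠ i := h.ne
  refine mul_map_prod_of_map_eq_of_ne _ (x := ⟨j, p⟩) (by simpa using h)
    (fun y _ hy => beta_prod_crossFactor_of_ne hji k p hy _) ?_
  rw [← crossFactor_zero, ← crossFactor_toNat ha hsym]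
  exact mul_map_prod_range_of_shift _ _ (beta_crossFactor_self hji k p) _

lemma beta_coef_of_ne {i j : Fin ℓ} (hji : j ≠ i) (k : Fin (m i)) (p : Fin (m j)) :
    beta ℓ m d hb j p (coef ℓ m a d hb l ν i k)
      = cst ℓ m (-((d i : ℂ) ^ (-(1/2 : ℂ)))) *
        (Rv ℓ m l ν i (pole ℓ m d hb i k) *
          beta ℓ m d hb j p (interaction ℓ m a d hb i k)) /
        ∏ q ∈ univ.erase k, (gam ℓ m i k - gam ℓ m i q) := by
  simp only [coef, Rv, map_div₀, map_mul, map_prod, map_sub, beta_cst,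
    beta_gam_of_index_ne hji.symm, beta_pole_of_ne hji]

lemma beta_coef_of_not_lt {i j : Fin ℓ} (hji : j ≠ i) (h : ¬ j < i)
    (k : Fin (m i)) (p : Fin (m j)) :
    beta ℓ m d hb j p (coef ℓ m a d hb l ν i k) = coef ℓ m a d hb l ν i k := by
  rw [beta_coef_of_ne hji, beta_interaction_of_not_lt hji h, coef]

lemma beta_coef_of_lt {i j : Fin ℓ} (h : j < i) (ha : a j i ≤ 0)
    (hsym : (d i : ℤ) * a i j = d j * a j i) (k : Fin (m i)) (p : Fin (m j)) :
    (pole ℓ m d hb i k - pole ℓ m d hb j p - kappa ℓ m a d hb i j)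
        * beta ℓ m d hb j p (coef ℓ m a d hb l ν i k)
      = (pole ℓ m d hb i k - pole ℓ m d hb j p + kappa ℓ m a d hb i j)
        * coef ℓ m a d hb l ν i k := by
  rw [beta_coef_of_ne h.ne, coef]
  linear_combination
    (cst ℓ m (-((d i : ℂ) ^ (-(1/2 : ℂ)))) * Rv ℓ m l ν i (pole ℓ m d hb i k) /
      ∏ q ∈ univ.erase k, (gam ℓ m i k - gam ℓ m i q)) * beta_interaction_of_lt h ha hsym k p

lemma coef_mixed_relation (ha : ∀ i j, i ≠ j → a i j ≤ 0)
    (hsym : ∀ i j, (d i : ℤ) * a i j = d j * a j i) {i j : Fin ℓ} (hij : i ≠ j)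
    (k : Fin (m i)) (p : Fin (m j)) :
    (pole ℓ m d hb j p - pole ℓ m d hb i k - kappa ℓ m a d hb i j)
        * (coef ℓ m a d hb l ν i k * beta ℓ m d hb i k (coef ℓ m a d hb l ν j p))
      = (pole ℓ m d hb j p - pole ℓ m d hb i k + kappa ℓ m a d hb i j)
        * (beta ℓ m d hb j p (coef ℓ m a d hb l ν i k) * coef ℓ m a d hb l ν j p) := by
  rcases hij.lt_or_gt with h | h
  · have hshift := beta_coef_of_lt (hb := hb) (l := l) (ν := ν) h (ha i j hij) (hsym j i) p k
    rw [kappa_symm (hsym j i)] at hshift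
    rw [beta_coef_of_not_lt hij.symm (not_lt.mpr h.le)]
    linear_combination coef ℓ m a d hb l ν i k * hshift
  · rw [beta_coef_of_not_lt hij (not_lt.mpr h.le)]
    linear_combination
      coef ℓ m a d hb l ν j p * beta_coef_of_lt h (ha j i hij.symm) (hsym i j) k p

end YangianOperators

theorem yangian_FF_mixed_general
    (ℓ : ℕ)
    (a : Fin ℓ → Fin ℓ → ℤ) (ha' : ∀ i j, i ≠ j → a i j ≤ 0)
    (d : Fin ℓ → ℕ)
    (hsym : ∀ i j, (d i : ℤ) * a i j = (d j : ℤ) * a j i)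
    (hb : ℂ) (m : Fin ℓ → ℕ)
    (l : Fin ℓ → ℕ)
    (ν : (i : Fin ℓ) → Fin (l i) → ℂ)
    (i j : Fin ℓ) (hij : i ≠ j) :
    (spec ℓ m 0 - spec ℓ m 1) •
        (Fop ℓ m a d hb l ν i (spec ℓ m 0) ∘ Fop ℓ m a d hb l ν j (spec ℓ m 1)
          - Fop ℓ m a d hb l ν j (spec ℓ m 1) ∘ Fop ℓ m a d hb l ν i (spec ℓ m 0))
      = cst ℓ m ((I * hb / 2) * ((d i : ℂ) * (a i j : ℂ))) •
          (Fop ℓ m a d hb l ν i (spec ℓ m 0) ∘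
              (Fop ℓ m a d hb l ν j (spec ℓ m 0) - Fop ℓ m a d hb l ν j (spec ℓ m 1))
            + (Fop ℓ m a d hb l ν j (spec ℓ m 0) - Fop ℓ m a d hb l ν j (spec ℓ m 1)) ∘
              Fop ℓ m a d hb l ν i (spec ℓ m 0))
        - (F0op ℓ m a d hb l ν i ∘
              (Fop ℓ m a d hb l ν j (spec ℓ m 0) - Fop ℓ m a d hb l ν j (spec ℓ m 1))
            - (Fop ℓ m a d hb l ν j (spec ℓ m 0) - Fop ℓ m a d hb l ν j (spec ℓ m 1)) ∘
              F0op ℓ m a d hb l ν i) := by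
  simp only [Fop_eq_polarDiffOp, F0op_eq_diffOp]
  exact polarDiffOp_mixed_relation _ _ _ _ _ _ _ _ _ (beta_comm hij)
    (fun _ => beta_spec _ _ _) (fun _ => beta_spec _ _ _) (fun _ => beta_spec _ _ _)
    (fun _ _ => beta_pole_of_ne hij _ _) (fun _ _ => beta_pole_of_ne hij.symm _ _)
    (coef_mixed_relation ha' hsym hij) (spec_sub_pole_ne_zero 0 i)
    (spec_sub_pole_ne_zero 0 j) (spec_sub_pole_ne_zero 1 j)

/-- the Yangian mixed lowering relation. -/
theorem yangian_FF_mixed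
    (ℓ : ℕ) (hl : 1 ≤ ℓ)
    (a : Fin ℓ → Fin ℓ → ℤ) (ha : ∀ i, a i i = 2) (ha' : ∀ i j, i ≠ j → a i j ≤ 0)
    (d : Fin ℓ → ℕ) (hd : ∀ i, 0 < d i)
    (hsym : ∀ i j, (d i : ℤ) * a i j = (d j : ℤ) * a j i)
    (hb : ℂ) (m : Fin ℓ → ℕ) (hm : ∀ i, 0 < m i)
    (l : Fin ℓ → ℕ) (hln : ∀ i, (l i : ℤ) = ∑ j, (m j : ℤ) * a j i)
    (ν : (i : Fin ℓ) → Fin (l i) → ℂ)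
    (i j : Fin ℓ) (hij : i ≠ j) :
    (spec ℓ m 0 - spec ℓ m 1) •
        (Fop ℓ m a d hb l ν i (spec ℓ m 0) ∘ Fop ℓ m a d hb l ν j (spec ℓ m 1)
          - Fop ℓ m a d hb l ν j (spec ℓ m 1) ∘ Fop ℓ m a d hb l ν i (spec ℓ m 0))
      = cst ℓ m ((I * hb / 2) * ((d i : ℂ) * (a i j : ℂ))) •
          (Fop ℓ m a d hb l ν i (spec ℓ m 0) ∘
              (Fop ℓ m a d hb l ν j (spec ℓ m 0) - Fop ℓ m a d hb l ν j (spec ℓ m 1))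
            + (Fop ℓ m a d hb l ν j (spec ℓ m 0) - Fop ℓ m a d hb l ν j (spec ℓ m 1)) ∘
              Fop ℓ m a d hb l ν i (spec ℓ m 0))
        - (F0op ℓ m a d hb l ν i ∘
              (Fop ℓ m a d hb l ν j (spec ℓ m 0) - Fop ℓ m a d hb l ν j (spec ℓ m 1))
            - (Fop ℓ m a d hb l ν j (spec ℓ m 0) - Fop ℓ m a d hb l ν j (spec ℓ m 1)) ∘
              F0op ℓ m a d hb l ν i) :=
  yangian_FF_mixed_general ℓ a ha' d hsym hb m l ν i j hij
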